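/- arXiv:2408.12180 — 2 statements merged into one kernel-verified Lean document; each statement's English description precedes it below -/
import Mathlib

section
/- Let n ≥ 2 be an integer and s₁ < s₂ real numbers. Suppose θ : [s₁, s₂] → ℝ is differentiable and satisfies θ'(s) ≤ −θ(s)²/(n−1) for all s ∈ [s₁, s₂]. If θ(s₂) > 0, then θ(s) > 0 for every s ∈ [s₁, s₂], and moreover θ(s₂) ≤ θ(s₁) / (1 + ((s₂ − s₁)/(n−1))·θ(s₁)). -/
/-!
On an interval where `θ' ≤ -k θ²` with `k ≥ 0`, `θ` is nonincreasing, so positivity at the right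
endpoint propagates to the whole interval. Where `θ > 0` the inequality reads `(1/θ)' ≥ k`, and
integrating it gives `1/θ(s₂) ≥ 1/θ(s₁) + k (s₂ - s₁)`, which is the claimed bound after inversion.
-/

open Set

section Riccati

variable {D : Set ℝ} {θ : ℝ → ℝ} {k : ℝ}

theorem antitoneOn_of_deriv_le_neg_mul_sq (hD : Convex ℝ D) (hk : 0 ≤ k)
    (hdiff : ∀ s ∈ D, DifferentiableAt ℝ θ s) (hineq : ∀ s ∈ D, deriv θ s ≤ -k * θ s ^ 2) :
    AntitoneOn θ D :=
  antitoneOn_of_deriv_nonpos hD (fun s hs => (hdiff s hs).continuousAt.continuousWithinAt)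
    (fun s hs => (hdiff s (interior_subset hs)).differentiableWithinAt)
    fun s hs => (hineq s (interior_subset hs)).trans (by nlinarith [sq_nonneg (θ s)])

theorem mul_sub_le_inv_sub_inv_of_deriv_le_neg_mul_sq (hD : Convex ℝ D)
    (hdiff : ∀ s ∈ D, DifferentiableAt ℝ θ s) (hpos : ∀ s ∈ D, 0 < θ s)
    (hineq : ∀ s ∈ D, deriv θ s ≤ -k * θ s ^ 2) {x y : ℝ} (hx : x ∈ D) (hy : y ∈ D)
    (hxy : x ≤ y) : k * (y - x) ≤ (θ y)⁻¹ - (θ x)⁻¹ := by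
  have hderiv : ∀ s ∈ D, HasDerivAt (fun t => (θ t)⁻¹) (-deriv θ s / θ s ^ 2) s :=
    fun s hs => (hdiff s hs).hasDerivAt.inv (hpos s hs).ne'
  refine hD.mul_sub_le_image_sub_of_le_deriv
    (fun s hs => (hderiv s hs).continuousAt.continuousWithinAt)
    (fun s hs => (hderiv s (interior_subset hs)).differentiableAt.differentiableWithinAt)
    (fun s hs => ?_) x hx y hy hxy
  have hs := interior_subset hs
  rw [(hderiv s hs).deriv, le_div_iff₀ (pow_pos (hpos s hs) 2)]
  linarith [hineq s hs]

end Riccati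

theorem le_div_one_add_mul_of_inv_add_le {x y c : ℝ} (hx : 0 < x) (hy : 0 < y) (hc : 0 ≤ c)
    (h : x⁻¹ + c ≤ y⁻¹) : y ≤ x / (1 + c * x) := by
  rw [le_div_iff₀ (by positivity)]
  have := mul_le_mul_of_nonneg_right h (mul_pos hx hy).le
  field_simp at this
  linarith

/-- Integrated form of the Riccati inequality: if `θ' ≤ -θ²/(n-1)` on `[s₁, s₂]`
and `θ s₂ > 0`, then `θ > 0` on the whole interval and
`θ s₂ ≤ θ s₁ / (1 + ((s₂ - s₁)/(n-1)) θ s₁)`. -/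
theorem riccati_integrated (n : ℕ) (hn : 2 ≤ n) (s₁ s₂ : ℝ) (hs : s₁ < s₂)
    (θ : ℝ → ℝ)
    (hdiff : ∀ s ∈ Set.Icc s₁ s₂, DifferentiableAt ℝ θ s)
    (hineq : ∀ s ∈ Set.Icc s₁ s₂, deriv θ s ≤ -(θ s) ^ 2 / (n - 1 : ℝ))
    (hpos : 0 < θ s₂) :
    (∀ s ∈ Set.Icc s₁ s₂, 0 < θ s) ∧
      θ s₂ ≤ θ s₁ / (1 + ((s₂ - s₁) / (n - 1 : ℝ)) * θ s₁) := by
  have hn1 : (0 : ℝ) ≤ n - 1 := by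
    have : (2 : ℝ) ≤ n := by exact_mod_cast hn
    linarith
  have hk : 0 ≤ 1 / ((n : ℝ) - 1) := one_div_nonneg.2 hn1
  have hineq' : ∀ s ∈ Icc s₁ s₂, deriv θ s ≤ -(1 / ((n : ℝ) - 1)) * θ s ^ 2 :=
    fun s hs => (hineq s hs).trans_eq (by ring)
  have hleft : s₁ ∈ Icc s₁ s₂ := left_mem_Icc.2 hs.le
  have hright : s₂ ∈ Icc s₁ s₂ := right_mem_Icc.2 hs.le
  have hanti := antitoneOn_of_deriv_le_neg_mul_sq (convex_Icc s₁ s₂) hk hdiff hineq'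
  have hposall : ∀ s ∈ Icc s₁ s₂, 0 < θ s := fun s hs => hpos.trans_le (hanti hs hright hs.2)
  refine ⟨hposall, le_div_one_add_mul_of_inv_add_le (hposall s₁ hleft) hpos
    (div_nonneg (sub_nonneg.2 hs.le) hn1) ?_⟩
  have := mul_sub_le_inv_sub_inv_of_deriv_le_neg_mul_sq (convex_Icc s₁ s₂) hdiff hposall hineq'
    hleft hright hs.le
  linarith [show (s₂ - s₁) / ((n : ℝ) - 1) = 1 / ((n : ℝ) - 1) * (s₂ - s₁) by ring]
end

section
/- Let X be a proper metric space in which every pair of points is joined by a geodesic segment, i.e. for all x, y ∈ X there exists η : [0, d(x, y)] → X with η(0) = x, η(d(x, y)) = y, and d(η(s), η(t)) = |s − t| for all s, t. Let γ : [0, ∞) → X be a geodesic ray with Busemann function b_γ, and let p ∈ X. Then there exists a geodesic ray c : [0, ∞) → X with c(0) = p such that b_γ(x) ≤ b_c(x) + b_γ(p) for all x ∈ X, where b_c is the Busemann function of c; in particular equality holds at x = p since b_c(p) = 0. -/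
/-!
Take geodesic segments `η n` from `p` to `γ n`. For each `t ≥ 0` the points `η n t` stay in the
compact ball of radius `t` about `p`, so they converge along a fixed ultrafilter on `ℕ` finer than
`atTop`; the limits `c t` form a geodesic ray from `p`. Since `η n t` is at distance
`d(p, γ n) - t` from `γ n`, we get `b_γ (η n t) ≤ d(p, γ n) - n - t`, and in the limit
`b_γ (c t) ≤ b_γ p - t`. Combined with `b_γ x ≤ b_γ (c t) + d(x, c t)`, letting `t → ∞` gives
`b_γ x ≤ b_c x + b_γ p`.
-/

open Filter Topology Set Metric

section

variable {X : Type*} [MetricSpace X]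

def IsGeodesicRay (c : ℝ → X) : Prop :=
  ∀ s t : ℝ, 0 ≤ s → 0 ≤ t → dist (c s) (c t) = |s - t|

def IsGeodesicSegment (η : ℝ → X) (L : ℝ) : Prop :=
  ∀ s ∈ Icc (0 : ℝ) L, ∀ t ∈ Icc (0 : ℝ) L, dist (η s) (η t) = |s - t|

def IsBusemannFunction (c : ℝ → X) (b : X → ℝ) : Prop :=
  ∀ x : X, Tendsto (fun t => dist x (c t) - t) atTop (𝓝 (b x))

namespace IsGeodesicSegment

variable {η : ℝ → X} {L t : ℝ}

theorem dist_zero_apply (hη : IsGeodesicSegment η L) (ht : t ∈ Icc 0 L) :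
    dist (η 0) (η t) = t := by
  rw [hη 0 ⟨le_rfl, ht.1.trans ht.2⟩ t ht, zero_sub, abs_neg, abs_of_nonneg ht.1]

theorem dist_apply_end (hη : IsGeodesicSegment η L) (ht : t ∈ Icc 0 L) :
    dist (η t) (η L) = L - t := by
  rw [hη t ht L ⟨ht.1.trans ht.2, le_rfl⟩, abs_of_nonpos (by linarith [ht.2]), neg_sub]

end IsGeodesicSegment

namespace IsGeodesicRay

variable {c : ℝ → X} {s t : ℝ}

theorem dist_of_le (hc : IsGeodesicRay c) (hs : 0 ≤ s) (hst : s ≤ t) :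
    dist (c s) (c t) = t - s := by
  rw [hc s t hs (hs.trans hst), abs_of_nonpos (by linarith), neg_sub]

theorem dist_zero_apply (hc : IsGeodesicRay c) (ht : 0 ≤ t) : dist (c 0) (c t) = t := by
  rw [hc.dist_of_le le_rfl ht, sub_zero]

theorem tendsto_dist_atTop (hc : IsGeodesicRay c) (p : X) :
    Tendsto (fun t => dist p (c t)) atTop atTop := by
  refine tendsto_atTop_mono' atTop ?_ (tendsto_atTop_add_const_right _ (-dist (c 0) p) tendsto_id)
  filter_upwards [eventually_ge_atTop 0] with t ht
  have := dist_triangle (c 0) p (c t)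
  rw [hc.dist_zero_apply ht] at this
  simp only [id]
  linarith

theorem dist_sub_antitoneOn (hc : IsGeodesicRay c) (x : X) :
    AntitoneOn (fun t => dist x (c t) - t) (Ici 0) := by
  intro s hs t _ hst
  have := dist_triangle x (c s) (c t)
  rw [hc.dist_of_le hs hst] at this
  simp only
  linarith

theorem neg_dist_le_dist_sub (hc : IsGeodesicRay c) (x : X) (ht : 0 ≤ t) :
    -dist x (c 0) ≤ dist x (c t) - t := by
  have := dist_triangle (c 0) x (c t)
  rw [hc.dist_zero_apply ht, dist_comm] at this
  linarith

theorem exists_isBusemannFunction (hc : IsGeodesicRay c) : ∃ b, IsBusemannFunction c b := by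
  suffices ∀ x, ∃ a, Tendsto (fun t => dist x (c t) - t) atTop (𝓝 a) by
    choose b hb using this
    exact ⟨b, hb⟩
  intro x
  let f : Ici (0 : ℝ) → ℝ := fun t => dist x (c t) - t
  have hf : Antitone f := fun s t hst => hc.dist_sub_antitoneOn x s.2 t.2 hst
  have hbdd : BddBelow (range f) := ⟨-dist x (c 0), by
    rintro _ ⟨t, rfl⟩
    exact hc.neg_dist_le_dist_sub x t.2⟩
  exact ⟨_, tendsto_comp_val_Ici_atTop.1 (tendsto_atTop_ciInf hf hbdd)⟩

end IsGeodesicRay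

namespace IsBusemannFunction

variable {c : ℝ → X} {b : X → ℝ}

theorem le_add_dist (hb : IsBusemannFunction c b) (x y : X) : b x ≤ b y + dist x y :=
  le_of_tendsto_of_tendsto' (hb x) ((hb y).add_const (dist x y)) fun t => by
    linarith [dist_triangle x y (c t)]

theorem lipschitzWith_one (hb : IsBusemannFunction c b) : LipschitzWith 1 b :=
  LipschitzWith.of_le_add hb.le_add_dist

theorem le_dist_sub (hb : IsBusemannFunction c b) (hc : IsGeodesicRay c) (y : X) {u : ℝ}
    (hu : 0 ≤ u) : b y ≤ dist y (c u) - u := by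
  refine le_of_tendsto (hb y) ?_
  filter_upwards [eventually_ge_atTop u] with t hut
  have := dist_triangle y (c u) (c t)
  rw [hc.dist_of_le hu hut] at this
  linarith

theorem apply_zero (hb : IsBusemannFunction c b) (hc : IsGeodesicRay c) : b (c 0) = 0 := by
  refine tendsto_nhds_unique (hb (c 0)) (tendsto_const_nhds.congr' ?_)
  filter_upwards [eventually_ge_atTop 0] with t ht
  rw [hc.dist_zero_apply ht, sub_self]

theorem le_add_of_apply_le_sub {c' : ℝ → X} {b' : X → ℝ} (hb : IsBusemannFunction c b)
    (hb' : IsBusemannFunction c' b') {A : ℝ} (hdesc : ∀ t, 0 ≤ t → b (c' t) ≤ A - t) (x : X) :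
    b x ≤ b' x + A := by
  refine ge_of_tendsto ((hb' x).add_const A) ?_
  filter_upwards [eventually_ge_atTop 0] with t ht
  linarith [hb.le_add_dist x (c' t), hdesc t ht, dist_comm x (c' t)]

theorem le_sub_of_tendsto_segments (hb : IsBusemannFunction c b) (hc : IsGeodesicRay c)
    {η : ℕ → ℝ → X} {p : X} (hη1 : ∀ n : ℕ, η n (dist p (c n)) = c n)
    (hη : ∀ n : ℕ, IsGeodesicSegment (η n) (dist p (c n)))
    {l : Filter ℕ} [l.NeBot] (hl : l ≤ atTop) {t : ℝ} (ht : 0 ≤ t) {y : X}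
    (hy : Tendsto (fun n => η n t) l (𝓝 y)) : b y ≤ b p - t := by
  have hlim : Tendsto (fun n : ℕ => dist p (c n) - n - t) l (𝓝 (b p - t)) :=
    (((hb p).comp tendsto_natCast_atTop_atTop).sub_const t).mono_left hl
  refine le_of_tendsto_of_tendsto ((hb.lipschitzWith_one.continuous.tendsto y).comp hy) hlim ?_
  filter_upwards [hl (((hc.tendsto_dist_atTop p).comp
    tendsto_natCast_atTop_atTop).eventually_ge_atTop t)] with n hn
  have hseg := (hη n).dist_apply_end ⟨ht, hn⟩
  rw [hη1] at hseg
  have := hb.le_dist_sub hc (η n t) n.cast_nonneg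
  simp only [Function.comp_apply]
  linarith

end IsBusemannFunction

theorem exists_tendsto_of_eventually_mem_closedBall [ProperSpace X] {ι : Type*}
    {U : Ultrafilter ι} {f : ι → X} {p : X} {r : ℝ} (h : ∀ᶠ i in U, f i ∈ closedBall p r) :
    ∃ a, Tendsto f U (𝓝 a) := by
  obtain ⟨a, -, ha⟩ := (isCompact_closedBall p r).ultrafilter_le_nhds (U.map f)
    (le_principal_iff.2 h)
  exact ⟨a, ha⟩

theorem exists_isGeodesicRay_tendsto_segments [ProperSpace X] {ι : Type*} {U : Ultrafilter ι}
    {η : ι → ℝ → X} {L : ι → ℝ} {p : X} (hη0 : ∀ i, η i 0 = p)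
    (hη : ∀ i, IsGeodesicSegment (η i) (L i)) (hL : Tendsto L U atTop) :
    ∃ c : ℝ → X, c 0 = p ∧ IsGeodesicRay c ∧
      ∀ t, 0 ≤ t → Tendsto (fun i => η i t) U (𝓝 (c t)) := by
  have hlim : ∀ t : ℝ, ∃ a, 0 ≤ t → Tendsto (fun i => η i t) U (𝓝 a) := by
    intro t
    by_cases ht : 0 ≤ t
    · obtain ⟨a, ha⟩ := exists_tendsto_of_eventually_mem_closedBall (p := p) (r := t) <| by
        filter_upwards [hL.eventually_ge_atTop t] with i hi
        rw [mem_closedBall, dist_comm, ← hη0 i, (hη i).dist_zero_apply ⟨ht, hi⟩]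
      exact ⟨a, fun _ => ha⟩
    · exact ⟨p, fun h => absurd h ht⟩
  choose c hc using hlim
  refine ⟨c, ?_, fun s t hs ht => ?_, hc⟩
  · exact tendsto_nhds_unique (hc 0 le_rfl) (by simp only [hη0]; exact tendsto_const_nhds)
  · refine tendsto_nhds_unique ((hc s hs).dist (hc t ht)) (tendsto_const_nhds.congr' ?_)
    filter_upwards [hL.eventually_ge_atTop (max s t)] with i hi
    exact ((hη i) s ⟨hs, (le_max_left s t).trans hi⟩ t ⟨ht, (le_max_right s t).trans hi⟩).symm

end

/-- Asymptote construction: in a proper geodesic metric space, for any geodesic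
ray `γ` with Busemann function `b_γ` and any point `p`, there is a geodesic ray
`c` from `p` whose Busemann function `b_c` satisfies `b_γ ≤ b_c + b_γ p`, with
`b_c p = 0`. -/
theorem exists_asymptote_ray {X : Type*} [MetricSpace X] [ProperSpace X]
    (hgeod : ∀ x y : X, ∃ η : ℝ → X, η 0 = x ∧ η (dist x y) = y ∧
      ∀ s ∈ Set.Icc (0 : ℝ) (dist x y), ∀ t ∈ Set.Icc (0 : ℝ) (dist x y),
        dist (η s) (η t) = |s - t|)
    (γ : ℝ → X)
    (hray : ∀ s t : ℝ, 0 ≤ s → 0 ≤ t → dist (γ s) (γ t) = |s - t|)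
    (bγ : X → ℝ)
    (hbγ : ∀ x : X, Tendsto (fun t => dist x (γ t) - t) atTop (nhds (bγ x)))
    (p : X) :
    ∃ c : ℝ → X, c 0 = p ∧
      (∀ s t : ℝ, 0 ≤ s → 0 ≤ t → dist (c s) (c t) = |s - t|) ∧
      ∃ bc : X → ℝ,
        (∀ x : X, Tendsto (fun t => dist x (c t) - t) atTop (nhds (bc x))) ∧
        (∀ x : X, bγ x ≤ bc x + bγ p) ∧
        bc p = 0 := by
  have hγ : IsGeodesicRay γ := hray
  have hbγ : IsBusemannFunction γ bγ := hbγ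
  choose η hη0 hη1 hη using fun n : ℕ => hgeod p (γ n)
  let U : Ultrafilter ℕ := .of atTop
  have hU : (U : Filter ℕ) ≤ atTop := Ultrafilter.of_le _
  obtain ⟨c, hc0, hc, hcη⟩ := exists_isGeodesicRay_tendsto_segments hη0 hη
    (((hγ.tendsto_dist_atTop p).comp tendsto_natCast_atTop_atTop).mono_left hU)
  obtain ⟨bc, hbc⟩ := hc.exists_isBusemannFunction
  have hdesc : ∀ t, 0 ≤ t → bγ (c t) ≤ bγ p - t := fun t ht =>
    hbγ.le_sub_of_tendsto_segments hγ hη1 hη hU ht (hcη t ht)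
  refine ⟨c, hc0, hc, bc, hbc, hbγ.le_add_of_apply_le_sub hbc hdesc, ?_⟩
  rw [← hc0]
  exact hbc.apply_zero hc
end
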